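/- Let J be a monomial ideal in S = K[X_1,...,X_n] with its standard grading, let R = S/J = ⊕_{i≥0} R_i, let π : S → R be the quotient map, set x_j = π(X_j) for 1 ≤ j ≤ n and A = {x_1,...,x_n} ⊆ R. Then for all h ≥ 1, the h-fold product set A^h = A···A (pointwise products in the multiplicative monoid of R) satisfies: |A^h| = dim_K R_h if J ∩ S_h = {0}, and |A^h| = dim_K R_h + 1 otherwise. -/

import Mathlib

open scoped Pointwise

/-- A monomial ideal in `S = K[X_1,…,X_n]`: an ideal generated by monomials
(monomials are encoded by their exponent vectors `σ : Fin n →₀ ℕ`). -/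
def IsMonomialIdeal {K : Type*} [Field K] {n : ℕ} (J : Ideal (MvPolynomial (Fin n) K)) : Prop :=
  ∃ T : Set (Fin n →₀ ℕ), J = Ideal.span ((fun σ => MvPolynomial.monomial σ (1 : K)) '' T)

/-- `quotDim K J i` is the Hilbert function of the graded quotient `R = S/J` in degree `i`:
the `K`-dimension of the image `R_i` of the space `S_i` of homogeneous polynomials of
degree `i` under the quotient map `S → S/J`. -/
noncomputable def quotDim (K : Type*) [Field K] {n : ℕ} (J : Ideal (MvPolynomial (Fin n) K))
    (i : ℕ) : ℕ :=
  Module.finrank K ↥(Submodule.map (Ideal.Quotient.mkₐ K J).toLinearMap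
    (MvPolynomial.homogeneousSubmodule (Fin n) K i))

open MvPolynomial

section Aux

variable {K : Type*} [Field K] {n : ℕ} {J : Ideal (MvPolynomial (Fin n) K)}

lemma aux_degree_add (a b : Fin n →₀ ℕ) : (a + b).degree = a.degree + b.degree := by
  simp [Finsupp.degree_eq_weight_one, map_add]

lemma aux_degree_single_one (j : Fin n) : (Finsupp.single j 1 : Fin n →₀ ℕ).degree = 1 := by
  classical
  exact Finsupp.degree_single j 1

/-- Membership in a monomial ideal is detected on the monomials of the support. -/
lemma aux_mem_monomial_ideal (hJ : IsMonomialIdeal J) {f : MvPolynomial (Fin n) K} :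
    f ∈ J ↔ ∀ σ ∈ f.support, (monomial σ (1 : K)) ∈ J := by
  classical
  constructor
  · intro hf
    obtain ⟨T, hT⟩ := hJ
    let I' : Ideal (MvPolynomial (Fin n) K) :=
      { carrier := { g | ∀ σ ∈ g.support, monomial σ (1 : K) ∈ J }
        zero_mem' := by simp
        add_mem' := by
          intro a b ha hb σ hσ
          rcases Finset.mem_union.1 (MvPolynomial.support_add hσ) with hc | hc
          · exact ha σ hc
          · exact hb σ hc
        smul_mem' := by
          intro p g hg σ hσ
          rw [smul_eq_mul] at hσ
          obtain ⟨a, ha, b, hb, rfl⟩ := Finset.mem_add.1 (MvPolynomial.support_mul p g hσ)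
          rw [show (monomial (a + b) (1 : K)) = monomial a 1 * monomial b 1 by
            rw [monomial_mul, one_mul]]
          exact J.mul_mem_left _ (hg b hb) }
    have hle : J ≤ I' := by
      rw [hT]
      refine Ideal.span_le.2 ?_
      rintro _ ⟨τ, hτ, rfl⟩ σ hσ
      rw [support_monomial, if_neg one_ne_zero, Finset.mem_singleton] at hσ
      subst hσ
      rw [hT]
      exact Ideal.subset_span ⟨σ, hτ, rfl⟩
    exact hle hf
  · intro hmem
    rw [f.as_sum]
    refine Ideal.sum_mem _ fun σ hσ => ?_
    rw [show (monomial σ (coeff σ f)) = C (coeff σ f) * monomial σ 1 by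
      rw [C_mul_monomial, mul_one]]
    exact J.mul_mem_left _ (hmem σ hσ)

end Aux

/-- Let `J` be a monomial ideal in `S = K[X_1,…,X_n]`, `R = S/J`, `π : S → R` the quotient
map, `x_j = π(X_j)` and `A = {x_1,…,x_n} ⊆ R`. Then for all `h ≥ 1`, the `h`-fold
pointwise product set `A^h = A⋯A` in the multiplicative monoid `R` satisfies
`|A^h| = dim_K R_h` if `J ∩ S_h = {0}`, and `|A^h| = dim_K R_h + 1` otherwise. -/
theorem stmt8 (K : Type*) [Field K] (n : ℕ) (J : Ideal (MvPolynomial (Fin n) K))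
    (hJ : IsMonomialIdeal J) (h : ℕ) (hh : 1 ≤ h) :
    ((∀ f ∈ MvPolynomial.homogeneousSubmodule (Fin n) K h, f ∈ J → f = 0) →
      Nat.card ↥((Set.range fun j : Fin n => Ideal.Quotient.mk J (MvPolynomial.X j)) ^ h)
        = quotDim K J h) ∧
    (¬ (∀ f ∈ MvPolynomial.homogeneousSubmodule (Fin n) K h, f ∈ J → f = 0) →
      Nat.card ↥((Set.range fun j : Fin n => Ideal.Quotient.mk J (MvPolynomial.X j)) ^ h)
        = quotDim K J h + 1) := by
  classical
  set A : Set (MvPolynomial (Fin n) K ⧸ J) :=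
    Set.range fun j : Fin n => Ideal.Quotient.mk J (MvPolynomial.X j) with hA
  set mkMon : (Fin n →₀ ℕ) → MvPolynomial (Fin n) K ⧸ J :=
    fun σ => Ideal.Quotient.mk J (monomial σ (1 : K)) with hmkMon
  -- Step 1: `A ^ m` is the set of images of monomials of degree `m`.
  have hpow : ∀ m : ℕ, A ^ m = mkMon '' {σ | σ.degree = m} := by
    intro m
    induction m with
    | zero =>
      ext x
      simp only [pow_zero, Set.mem_one]
      constructor
      · rintro rfl
        exact ⟨0, by simp, by simp [hmkMon, monomial_zero']⟩
      · rintro ⟨σ, hσ, rfl⟩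
        rw [Set.mem_setOf_eq, Finsupp.degree_eq_zero_iff] at hσ
        subst hσ
        simp [hmkMon, monomial_zero']
    | succ m ih =>
      rw [pow_succ, ih]
      ext x
      constructor
      · intro hx
        obtain ⟨y, hy, z, hz, rfl⟩ := Set.mem_mul.1 hx
        obtain ⟨σ, hσ, rfl⟩ := hy
        obtain ⟨j, rfl⟩ := hz
        refine ⟨σ + Finsupp.single j 1, ?_, ?_⟩
        · rw [Set.mem_setOf_eq, aux_degree_add, hσ, aux_degree_single_one]
        · show Ideal.Quotient.mk J (monomial (σ + Finsupp.single j 1) (1 : K))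
              = Ideal.Quotient.mk J (monomial σ (1 : K)) * Ideal.Quotient.mk J (MvPolynomial.X j)
          rw [← map_mul]
          congr 1
          rw [show (MvPolynomial.X j : MvPolynomial (Fin n) K)
              = monomial (Finsupp.single j 1) 1 by rw [← X_pow_eq_monomial, pow_one],
            monomial_mul, mul_one]
      · rintro ⟨σ, hσ, rfl⟩
        rw [Set.mem_setOf_eq] at hσ
        have hσ0 : σ ≠ 0 := by
          intro h0
          rw [h0, map_zero] at hσ
          omega
        obtain ⟨j, hj⟩ := Finsupp.support_nonempty_iff.2 hσ0
        have hj1 : 1 ≤ σ j := Nat.one_le_iff_ne_zero.2 (Finsupp.mem_support_iff.1 hj)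
        set τ : Fin n →₀ ℕ := σ - Finsupp.single j 1 with hτ
        have hστ : σ = τ + Finsupp.single j 1 := by
          ext i
          rw [hτ]
          simp only [Finsupp.add_apply, Finsupp.tsub_apply, Finsupp.single_apply]
          by_cases hij : j = i
          · subst hij; simp; omega
          · simp [hij]
        have hτdeg : τ.degree = m := by
          have := hστ ▸ hσ
          rw [aux_degree_add, aux_degree_single_one] at this
          omega
        have : mkMon σ = mkMon τ * Ideal.Quotient.mk J (MvPolynomial.X j) := by
          rw [hmkMon, ← map_mul]
          congr 1
          rw [show (MvPolynomial.X j : MvPolynomial (Fin n) K)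
              = monomial (Finsupp.single j 1) 1 by rw [← X_pow_eq_monomial, pow_one]]
          rw [monomial_mul, mul_one, ← hστ]
        rw [this]
        exact Set.mul_mem_mul ⟨τ, hτdeg, rfl⟩ ⟨j, rfl⟩
  -- The "good" exponents in degree h.
  set Good : Set (Fin n →₀ ℕ) := {σ | σ.degree = h ∧ (monomial σ (1 : K)) ∉ J} with hGood
  have hGoodfin : Good.Finite :=
    (Finsupp.finite_of_degree_le h).subset fun σ hσ => le_of_eq hσ.1
  have hne0 : ∀ σ ∈ Good, mkMon σ ≠ 0 := fun σ hσ h0 =>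
    hσ.2 (Ideal.Quotient.eq_zero_iff_mem.1 h0)
  have hinj : Set.InjOn mkMon Good := by
    intro σ hσ τ hτ heq
    by_contra hne
    have hsub : monomial σ (1 : K) - monomial τ 1 ∈ J := Ideal.Quotient.eq.mp heq
    have hsupp : σ ∈ (monomial σ (1 : K) - monomial τ 1).support := by
      rw [MvPolynomial.mem_support_iff, coeff_sub, coeff_monomial, coeff_monomial,
        if_pos rfl, if_neg (Ne.symm hne)]
      simp
    exact hσ.2 ((aux_mem_monomial_ideal hJ).1 hsub σ hsupp)
  -- Step 2: the vanishing condition in degree h amounts to: no degree-h monomial lies in J.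
  have hcond : (∀ f ∈ MvPolynomial.homogeneousSubmodule (Fin n) K h, f ∈ J → f = 0)
      ↔ ∀ σ : Fin n →₀ ℕ, σ.degree = h → (monomial σ (1 : K)) ∉ J := by
    constructor
    · intro hC σ hσ hmem
      have h1 : (monomial σ (1 : K)) ∈ MvPolynomial.homogeneousSubmodule (Fin n) K h :=
        isHomogeneous_monomial _ hσ
      have := hC _ h1 hmem
      exact one_ne_zero (monomial_eq_zero.1 this)
    · intro hC f hf hfJ
      by_contra hf0
      obtain ⟨σ, hσ⟩ := MvPolynomial.support_nonempty.2 hf0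
      have hdeg : σ.degree = h := by
        have := (mem_homogeneousSubmodule _ _).1 hf (MvPolynomial.mem_support_iff.1 hσ)
        rw [Finsupp.degree_eq_weight_one]
        exact this
      exact hC σ hdeg ((aux_mem_monomial_ideal hJ).1 hfJ σ hσ)
  -- Step 3: the homogeneous submodule is spanned by its monomials.
  have hsub : MvPolynomial.homogeneousSubmodule (Fin n) K h
      = Submodule.span K ((fun σ => monomial σ (1 : K)) '' {σ | σ.degree = h}) := by
    apply le_antisymm
    · intro f hf
      rw [mem_homogeneousSubmodule] at hf
      rw [f.as_sum]
      refine Submodule.sum_mem _ fun σ hσ => ?_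
      have hdeg : σ.degree = h := by
        have := hf (MvPolynomial.mem_support_iff.1 hσ)
        rw [Finsupp.degree_eq_weight_one]
        exact this
      rw [show (monomial σ (coeff σ f)) = coeff σ f • monomial σ (1 : K) by
        rw [smul_monomial, smul_eq_mul, mul_one]]
      exact Submodule.smul_mem _ _ (Submodule.subset_span ⟨σ, hdeg, rfl⟩)
    · rw [Submodule.span_le]
      rintro _ ⟨σ, hσ, rfl⟩
      exact isHomogeneous_monomial _ hσ
  -- Step 4: the image of the homogeneous submodule is spanned by images of good monomials.
  have hmap : Submodule.map (Ideal.Quotient.mkₐ K J).toLinearMap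
      (MvPolynomial.homogeneousSubmodule (Fin n) K h)
      = Submodule.span K (mkMon '' Good) := by
    rw [hsub, Submodule.map_span, ← Set.image_comp]
    have hfun : ((Ideal.Quotient.mkₐ K J).toLinearMap ∘ fun σ => monomial σ (1 : K)) = mkMon := by
      funext σ
      simp [hmkMon, Ideal.Quotient.mkₐ_eq_mk]
    rw [hfun]
    apply le_antisymm
    · rw [Submodule.span_le]
      rintro _ ⟨σ, hσ, rfl⟩
      by_cases hm : monomial σ (1 : K) ∈ J
      · rw [show mkMon σ = 0 from Ideal.Quotient.eq_zero_iff_mem.2 hm]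
        exact Submodule.zero_mem _
      · exact Submodule.subset_span ⟨σ, ⟨hσ, hm⟩, rfl⟩
    · exact Submodule.span_mono (Set.image_mono fun σ hσ => hσ.1)
  -- Step 5: images of good monomials are linearly independent.
  have hli : LinearIndependent K ((↑) : (mkMon '' Good) → MvPolynomial (Fin n) K ⧸ J) := by
    show LinearIndepOn K id (mkMon '' Good)
    rw [← linearIndepOn_iff_image hinj]
    unfold LinearIndepOn
    rw [linearIndependent_iff']
    intro s g hsum i hi
    by_contra hgi
    set p : MvPolynomial (Fin n) K := ∑ j ∈ s, monomial (j : Fin n →₀ ℕ) (g j) with hp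
    have hterm : ∀ j : Good,
        Ideal.Quotient.mk J (monomial (j : Fin n →₀ ℕ) (g j)) = g j • mkMon (j : Fin n →₀ ℕ) := by
      intro j
      rw [show (monomial (j : Fin n →₀ ℕ) (g j)) = g j • monomial (j : Fin n →₀ ℕ) (1 : K) by
        rw [smul_monomial, smul_eq_mul, mul_one]]
      rw [← Ideal.Quotient.mkₐ_eq_mk (R₁ := K), map_smul, Ideal.Quotient.mkₐ_eq_mk]
    have hmkp : Ideal.Quotient.mk J p = 0 := by
      rw [hp, map_sum, ← hsum]
      exact Finset.sum_congr rfl fun j _ => hterm j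
    have hpJ : p ∈ J := Ideal.Quotient.eq_zero_iff_mem.1 hmkp
    have hci : coeff (i : Fin n →₀ ℕ) p = g i := by
      rw [hp, MvPolynomial.coeff_sum]
      rw [Finset.sum_eq_single i]
      · rw [coeff_monomial, if_pos rfl]
      · intro j hj hji
        rw [coeff_monomial, if_neg fun hc => hji (Subtype.ext hc)]
      · intro his; exact absurd hi his
    have hisupp : (i : Fin n →₀ ℕ) ∈ p.support :=
      MvPolynomial.mem_support_iff.2 (by rw [hci]; exact hgi)
    exact i.2.2 ((aux_mem_monomial_ideal hJ).1 hpJ _ hisupp)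
  -- Step 6: quotDim equals the number of good exponents.
  haveI : Fintype (mkMon '' Good) := (hGoodfin.image mkMon).fintype
  have hquot : quotDim K J h = Good.ncard := by
    rw [quotDim, hmap, finrank_span_set_eq_card hli, ← Set.ncard_eq_toFinset_card',
      Set.ncard_image_of_injOn hinj]
  have hcard0 : Nat.card ↥(A ^ h) = (A ^ h).ncard := Nat.card_coe_set_eq _
  constructor
  · intro hC
    have hC' := hcond.1 hC
    have hDh : {σ : Fin n →₀ ℕ | σ.degree = h} = Good := by
      ext σ
      exact ⟨fun hσ => ⟨hσ, hC' σ hσ⟩, fun hσ => hσ.1⟩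
    rw [hcard0, hpow h, hDh, Set.ncard_image_of_injOn hinj, hquot]
  · intro hC
    obtain ⟨σ0, hσ0deg, hσ0mem⟩ : ∃ σ0 : Fin n →₀ ℕ, σ0.degree = h ∧ monomial σ0 (1 : K) ∈ J := by
      by_contra hno
      push_neg at hno
      exact hC (hcond.2 hno)
    have himg : A ^ h = insert (0 : MvPolynomial (Fin n) K ⧸ J) (mkMon '' Good) := by
      rw [hpow h]
      ext x
      rw [Set.mem_insert_iff]
      constructor
      · rintro ⟨σ, hσ, rfl⟩
        by_cases hm : monomial σ (1 : K) ∈ J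
        · exact Or.inl (Ideal.Quotient.eq_zero_iff_mem.2 hm)
        · exact Or.inr ⟨σ, ⟨hσ, hm⟩, rfl⟩
      · rintro (rfl | ⟨σ, hσ, rfl⟩)
        · exact ⟨σ0, hσ0deg, Ideal.Quotient.eq_zero_iff_mem.2 hσ0mem⟩
        · exact ⟨σ, hσ.1, rfl⟩
    have h0ni : (0 : MvPolynomial (Fin n) K ⧸ J) ∉ mkMon '' Good := by
      rintro ⟨σ, hσ, hσ0⟩
      exact hne0 σ hσ hσ0
    rw [hcard0, himg, Set.ncard_insert_of_notMem h0ni (hGoodfin.image mkMon),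
      Set.ncard_image_of_injOn hinj, hquot]
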